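/- arXiv:1806.04296 — 9 statements merged into one kernel-verified Lean document; each statement's English description precedes it below -/
import Mathlib

section
/- If the points a₁,...,aₘ in a real Hilbert space H are not collinear (i.e., there is no straight line containing all of them), then the function f(x) = Σᵢ wᵢ‖x - aᵢ‖ with positive weights wᵢ is strictly convex on H. -/
open Finset
open scoped RealInnerProductSpace

theorem fermat_weber_strictConvex
    {H : Type*} [NormedAddCommGroup H] [InnerProductSpace ℝ H]
    {m : ℕ} (hm : 1 ≤ m) (a : Fin m → H) (w : Fin m → ℝ)
    (hw : ∀ i, 0 < w i)
    (hcol : ¬ ∃ u v : H, ∀ i, ∃ t : ℝ, a i = u + t • v) :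
    StrictConvexOn ℝ (Set.univ : Set H) (fun x => ∑ i, w i * ‖x - a i‖) := by
  refine ⟨convex_univ, fun x _ y _ hxy p q hp hq hpq => ?_⟩
  simp only [smul_eq_mul]
  have hz : ∀ i : Fin m, p • x + q • y - a i = p • (x - a i) + q • (y - a i) := by
    intro i
    match_scalars <;> linarith
  -- there is an index where the triangle inequality is strict
  have hexists : ∃ j, ¬ SameRay ℝ (p • (x - a j)) (q • (y - a j)) := by
    by_contra h
    push_neg at h
    apply hcol
    refine ⟨x, y - x, fun i => ?_⟩
    rcases h i with h0 | h0 | ⟨r₁, r₂, hr₁, hr₂, hr⟩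
    · refine ⟨0, ?_⟩
      have : x - a i = 0 := by
        rcases smul_eq_zero.1 h0 with h' | h'
        · exact absurd h' hp.ne'
        · exact h'
      have hax : a i = x := (sub_eq_zero.1 this).symm
      simp [hax]
    · refine ⟨1, ?_⟩
      have hy : y - a i = 0 := by
        rcases smul_eq_zero.1 h0 with h' | h'
        · exact absurd h' hq.ne'
        · exact h'
      have : a i = y := (sub_eq_zero.1 hy).symm
      rw [this, one_smul]
      abel
    · rw [smul_smul, smul_smul] at hr
      set s := r₁ * p with hs
      set u := r₂ * q with hu
      have hspos : 0 < s := mul_pos hr₁ hp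
      have hupos : 0 < u := mul_pos hr₂ hq
      have hne : u - s ≠ 0 := by
        intro hus
        have hsu : s = u := by linarith [sub_eq_zero.1 hus]
        rw [hsu] at hr
        have := smul_right_injective H hupos.ne' hr
        exact hxy (by have h3 := congrArg (· + a i) this; simpa using h3)
      refine ⟨u / (u - s), ?_⟩
      apply smul_right_injective H hne
      show (u - s) • a i = (u - s) • (x + (u / (u - s)) • (y - x))
      have h2 : (u - s) • a i = u • y - s • x := by
        rw [smul_sub, smul_sub] at hr
        rw [sub_smul]
        linear_combination (norm := module) hr
      rw [h2, smul_add, smul_smul, mul_div_cancel₀ _ hne, smul_sub, sub_smul]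
      abel
  obtain ⟨j, hj⟩ := hexists
  have hle : ∀ i ∈ Finset.univ, w i * ‖p • x + q • y - a i‖ ≤
      p * (w i * ‖x - a i‖) + q * (w i * ‖y - a i‖) := by
    intro i _
    rw [hz i]
    have := norm_add_le (p • (x - a i)) (q • (y - a i))
    rw [norm_smul, norm_smul, Real.norm_of_nonneg hp.le, Real.norm_of_nonneg hq.le] at this
    nlinarith [(hw i).le, norm_nonneg (p • (x - a i) + q • (y - a i))]
  have hlt : w j * ‖p • x + q • y - a j‖ <
      p * (w j * ‖x - a j‖) + q * (w j * ‖y - a j‖) := by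
    rw [hz j]
    have := norm_add_lt_of_not_sameRay hj
    rw [norm_smul, norm_smul, Real.norm_of_nonneg hp.le, Real.norm_of_nonneg hq.le] at this
    nlinarith [hw j]
  calc ∑ i, w i * ‖p • x + q • y - a i‖
      < ∑ i, (p * (w i * ‖x - a i‖) + q * (w i * ‖y - a i‖)) :=
        Finset.sum_lt_sum hle ⟨j, Finset.mem_univ j, hlt⟩
    _ = p * ∑ i, w i * ‖x - a i‖ + q * ∑ i, w i * ‖y - a i‖ := by
        rw [Finset.sum_add_distrib, Finset.mul_sum, Finset.mul_sum]
end

section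
/- Let C be a nonempty closed convex subset of a real Hilbert space H, a₁,...,aₘ ∈ H non-collinear, w₁,...,wₘ > 0, and define T(x) = (Σᵢ wᵢ aᵢ/‖x-aᵢ‖)/(Σᵢ wᵢ/‖x-aᵢ‖) for x ∉ {a₁,...,aₘ}. If x̄ ∈ C with x̄ ∉ {a₁,...,aₘ}, then x̄ minimizes f(x) = Σᵢ wᵢ‖x-aᵢ‖ over C if and only if Π_C(T(x̄)) = x̄. -/
open Finset
open scoped RealInnerProductSpace

/-- The Weiszfeld operator. -/
noncomputable def weiszfeldT {H : Type*} [NormedAddCommGroup H] [InnerProductSpace ℝ H]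
    {m : ℕ} (w : Fin m → ℝ) (a : Fin m → H) (x : H) : H :=
  (∑ i, w i / ‖x - a i‖)⁻¹ • ∑ i, (w i / ‖x - a i‖) • a i

/-!
Off the points aᵢ the objective f is differentiable with gradient
∑ wᵢ (x - aᵢ) / ‖x - aᵢ‖ = s(x) • (x - T x), where s(x) = ∑ wᵢ / ‖x - aᵢ‖ > 0. Since f is convex
(each term satisfies the subgradient inequality by Cauchy–Schwarz), x̄ minimizes f over C iff
⟪T x̄ - x̄, z - x̄⟫ ≤ 0 for all z ∈ C, and this variational inequality characterizes
x̄ = Π_C (T x̄).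
-/

section

variable {H : Type*} [NormedAddCommGroup H] [InnerProductSpace ℝ H]

theorem hasFDerivAt_norm_of_ne_zero {c : H} (hc : c ≠ 0) :
    HasFDerivAt (‖·‖) (‖c‖⁻¹ • innerSL ℝ c) c := by
  have h := ((hasStrictFDerivAt_norm_sq c).hasFDerivAt).sqrt (by simpa using hc)
  simp only [Real.sqrt_sq (norm_nonneg _)] at h
  convert h using 1
  ext v
  simp only [smul_apply, coe_innerSL_apply, smul_eq_mul, one_div, mul_inv_rev, nsmul_eq_mul,
    Nat.cast_ofNat]
  field_simp

theorem IsMinOn.apply_sub_nonneg_of_hasFDerivAt {E : Type*} [NormedAddCommGroup E]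
    [NormedSpace ℝ E] {f : E → ℝ} {f' : E →L[ℝ] ℝ} {C : Set E} {x z : E}
    (hmin : IsMinOn f C x) (hf : HasFDerivAt f f' x) (hC : Convex ℝ C) (hx : x ∈ C)
    (hz : z ∈ C) : 0 ≤ f' (z - x) :=
  hmin.localize.hasFDerivWithinAt_nonneg hf.hasFDerivWithinAt
    (sub_mem_posTangentConeAt_of_segment_subset (hC.segment_subset hx hz))

theorem inv_norm_mul_inner_sub_le (u v : H) : ‖u‖⁻¹ * ⟪u, v - u⟫ ≤ ‖v‖ - ‖u‖ := by
  rcases eq_or_ne u 0 with rfl | hu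
  · simp
  have hu' : 0 < ‖u‖ := norm_pos_iff.2 hu
  rw [inner_sub_right, real_inner_self_eq_norm_sq, inv_mul_le_iff₀ hu']
  nlinarith [real_inner_le_norm u v]

section WeightedDistanceSum

variable {m : ℕ} (w : Fin m → ℝ) (a : Fin m → H)

theorem hasFDerivAt_sum_mul_norm_sub {x : H} (hx : ∀ i, x ≠ a i) :
    HasFDerivAt (fun y => ∑ i, w i * ‖y - a i‖)
      (innerSL ℝ (∑ i, (w i / ‖x - a i‖) • (x - a i))) x := by
  rw [map_sum]
  refine HasFDerivAt.fun_sum fun i _ => ?_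
  have h := ((hasFDerivAt_norm_of_ne_zero (sub_ne_zero.2 (hx i))).comp x
    ((hasFDerivAt_id x).sub_const (a i))).const_mul (w i)
  refine h.congr_fderiv ?_
  ext v
  simp [div_eq_mul_inv, mul_assoc]

theorem inner_le_sum_mul_norm_sub_sub (hw : ∀ i, 0 ≤ w i) (x z : H) :
    ⟪∑ i, (w i / ‖x - a i‖) • (x - a i), z - x⟫ ≤
      ∑ i, w i * ‖z - a i‖ - ∑ i, w i * ‖x - a i‖ := by
  rw [sum_inner, ← sum_sub_distrib]
  refine sum_le_sum fun i _ => ?_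
  have h := inv_norm_mul_inner_sub_le (x - a i) (z - a i)
  rw [sub_sub_sub_cancel_right] at h
  rw [real_inner_smul_left, div_eq_mul_inv, mul_assoc, ← mul_sub]
  exact mul_le_mul_of_nonneg_left h (hw i)

theorem isMinOn_sum_mul_norm_sub_iff (hw : ∀ i, 0 ≤ w i) {C : Set H} (hC : Convex ℝ C)
    {x : H} (hxC : x ∈ C) (hx : ∀ i, x ≠ a i) :
    IsMinOn (fun y => ∑ i, w i * ‖y - a i‖) C x ↔
      ∀ z ∈ C, 0 ≤ ⟪∑ i, (w i / ‖x - a i‖) • (x - a i), z - x⟫ := by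
  refine ⟨fun hmin z hz => ?_, fun h z hz => ?_⟩
  · exact hmin.apply_sub_nonneg_of_hasFDerivAt (hasFDerivAt_sum_mul_norm_sub w a hx) hC hxC hz
  · exact sub_nonneg.1 ((h z hz).trans (inner_le_sum_mul_norm_sub_sub w a hw x z))

theorem sum_smul_sub_eq_smul_sub_weiszfeldT {x : H} (hs : ∑ i, w i / ‖x - a i‖ ≠ 0) :
    ∑ i, (w i / ‖x - a i‖) • (x - a i) =
      (∑ i, w i / ‖x - a i‖) • (x - weiszfeldT w a x) := by
  rw [weiszfeldT, smul_sub, smul_inv_smul₀ hs, sum_smul, ← sum_sub_distrib]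
  simp only [smul_sub]

end WeightedDistanceSum

theorem eq_of_inner_sub_nonpos {y p q : H} (hp : ⟪y - p, q - p⟫ ≤ 0) (hq : ⟪y - q, p - q⟫ ≤ 0) :
    p = q := by
  have h : ‖q - p‖ ^ 2 = ⟪y - p, q - p⟫ + ⟪y - q, p - q⟫ := by
    rw [← real_inner_self_eq_norm_sq, ← neg_sub q p, inner_neg_right, ← sub_eq_add_neg,
      ← inner_sub_left, sub_sub_sub_cancel_left]
  exact (sub_eq_zero.1 (norm_eq_zero.1 (by nlinarith [norm_nonneg (q - p)]))).symm

theorem proj_eq_iff_inner_sub_nonpos {C : Set H} {proj : H → H}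
    (hproj : ∀ x : H, proj x ∈ C ∧ ∀ z ∈ C, ⟪x - proj x, z - proj x⟫ ≤ 0) {x y : H}
    (hx : x ∈ C) : proj y = x ↔ ∀ z ∈ C, ⟪y - x, z - x⟫ ≤ 0 := by
  refine ⟨fun h => h ▸ (hproj y).2, fun h => ?_⟩
  exact eq_of_inner_sub_nonpos ((hproj y).2 x hx) (h _ (hproj y).1)

end

theorem isMinOn_iff_proj_fixed_general
    {H : Type*} [NormedAddCommGroup H] [InnerProductSpace ℝ H]
    {m : ℕ} (hm : 1 ≤ m) (a : Fin m → H) (w : Fin m → ℝ)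
    (hw : ∀ i, 0 < w i)
    (C : Set H) (hCconv : Convex ℝ C)
    (proj : H → H)
    (hproj : ∀ x : H, proj x ∈ C ∧ ∀ z ∈ C, ⟪x - proj x, z - proj x⟫ ≤ 0)
    (xbar : H) (hxC : xbar ∈ C) (hxA : xbar ∉ Set.range a) :
    IsMinOn (fun x => ∑ i, w i * ‖x - a i‖) C xbar ↔ proj (weiszfeldT w a xbar) = xbar := by
  have hx : ∀ i, xbar ≠ a i := fun i h => hxA ⟨i, h.symm⟩
  have hs : 0 < ∑ i, w i / ‖xbar - a i‖ :=
    sum_pos (fun i _ => div_pos (hw i) (norm_pos_iff.2 (sub_ne_zero.2 (hx i))))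
      (univ_nonempty_iff.2 (Fin.pos_iff_nonempty.1 hm))
  rw [isMinOn_sum_mul_norm_sub_iff w a (fun i => (hw i).le) hCconv hxC hx,
    sum_smul_sub_eq_smul_sub_weiszfeldT w a hs.ne', proj_eq_iff_inner_sub_nonpos hproj hxC]
  refine forall₂_congr fun z _ => ?_
  rw [real_inner_smul_left, mul_nonneg_iff_of_pos_left hs, ← neg_sub, inner_neg_left, neg_nonneg]

theorem isMinOn_iff_proj_fixed
    {H : Type*} [NormedAddCommGroup H] [InnerProductSpace ℝ H] [CompleteSpace H]
    {m : ℕ} (hm : 1 ≤ m) (a : Fin m → H) (w : Fin m → ℝ)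
    (hw : ∀ i, 0 < w i)
    (hcol : ¬ ∃ u v : H, ∀ i, ∃ t : ℝ, a i = u + t • v)
    (C : Set H) (hCne : C.Nonempty) (hCclosed : IsClosed C) (hCconv : Convex ℝ C)
    (proj : H → H)
    (hproj : ∀ x : H, proj x ∈ C ∧ ∀ z ∈ C, ⟪x - proj x, z - proj x⟫ ≤ 0)
    (xbar : H) (hxC : xbar ∈ C) (hxA : xbar ∉ Set.range a) :
    IsMinOn (fun x => ∑ i, w i * ‖x - a i‖) C xbar ↔ proj (weiszfeldT w a xbar) = xbar :=
  isMinOn_iff_proj_fixed_general hm a w hw C hCconv proj hproj xbar hxC hxA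
end

section
/- If in addition int(C) ≠ ∅ and aⱼ ∈ int(C) (or C = H), then aⱼ minimizes f(x) = Σᵢ wᵢ‖x - aᵢ‖ over C if and only if ‖Σ_{i≠j} wᵢ(aⱼ - aᵢ)/‖aⱼ - aᵢ‖‖ ≤ wⱼ. -/
open Finset
open scoped RealInnerProductSpace

/-- Subgradient inequality for the norm: lower bound. -/
private lemma norm_add_lower {H : Type*} [NormedAddCommGroup H] [InnerProductSpace ℝ H]
    (v z : H) (hv : v ≠ 0) : (‖v‖)⁻¹ * ⟪v, z⟫ ≤ ‖v + z‖ - ‖v‖ := by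
  have hv' : (0:ℝ) < ‖v‖ := norm_pos_iff.mpr hv
  have h1 : ⟪v, v + z⟫ ≤ ‖v‖ * ‖v + z‖ := real_inner_le_norm v (v + z)
  have h2 : ⟪v, v + z⟫ = ‖v‖ ^ 2 + ⟪v, z⟫ := by
    rw [inner_add_right, real_inner_self_eq_norm_sq]
  have h3 : ⟪v, z⟫ ≤ ‖v‖ * (‖v + z‖ - ‖v‖) := by nlinarith
  have h4 : (‖v‖)⁻¹ * ⟪v, z⟫ ≤ (‖v‖)⁻¹ * (‖v‖ * (‖v + z‖ - ‖v‖)) := by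
    exact mul_le_mul_of_nonneg_left h3 (by positivity)
  calc (‖v‖)⁻¹ * ⟪v, z⟫ ≤ (‖v‖)⁻¹ * (‖v‖ * (‖v + z‖ - ‖v‖)) := h4
    _ = ‖v + z‖ - ‖v‖ := by field_simp

/-- Quadratic upper bound for the norm. -/
private lemma norm_add_upper {H : Type*} [NormedAddCommGroup H] [InnerProductSpace ℝ H]
    (v z : H) (hv : v ≠ 0) :
    ‖v + z‖ ≤ ‖v‖ + (⟪v, z⟫ + ‖z‖ ^ 2 / 2) / ‖v‖ := by
  have hv' : (0:ℝ) < ‖v‖ := norm_pos_iff.mpr hv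
  have h1 : ‖v + z‖ ^ 2 = ‖v‖ ^ 2 + 2 * ⟪v, z⟫ + ‖z‖ ^ 2 := norm_add_sq_real v z
  have h2 : 2 * ‖v‖ * ‖v + z‖ ≤ ‖v‖ ^ 2 + ‖v + z‖ ^ 2 := by
    nlinarith [sq_nonneg (‖v‖ - ‖v + z‖)]
  rw [← sub_le_iff_le_add', le_div_iff₀ hv']
  nlinarith

theorem isMinOn_anchor_iff_interior
    {H : Type*} [NormedAddCommGroup H] [InnerProductSpace ℝ H] [CompleteSpace H]
    {m : ℕ} (a : Fin m → H) (w : Fin m → ℝ)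
    (hw : ∀ i, 0 < w i)
    (hcol : ¬ ∃ u v : H, ∀ i, ∃ t : ℝ, a i = u + t • v)
    (C : Set H) (hCne : C.Nonempty) (hCclosed : IsClosed C) (hCconv : Convex ℝ C)
    (j : Fin m) (haj : a j ∈ interior C)
    (hdist : ∀ i, i ≠ j → a i ≠ a j) :
    IsMinOn (fun x => ∑ i, w i * ‖x - a i‖) C (a j) ↔
      ‖∑ i ∈ Finset.univ.erase j, (w i / ‖a j - a i‖) • (a j - a i)‖ ≤ w j := by
  set R : H := ∑ i ∈ Finset.univ.erase j, (w i / ‖a j - a i‖) • (a j - a i) with hRdef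
  have hne : ∀ i ∈ Finset.univ.erase j, a j - a i ≠ 0 := by
    intro i hi
    have := hdist i (Finset.ne_of_mem_erase hi)
    intro h
    exact this (by rw [sub_eq_zero] at h; exact h.symm)
  -- inner product with R as a sum
  have hinnerR : ∀ z : H, ⟪R, z⟫ = ∑ i ∈ Finset.univ.erase j, (w i / ‖a j - a i‖) * ⟪a j - a i, z⟫ := by
    intro z
    rw [hRdef, sum_inner]
    exact Finset.sum_congr rfl fun i _ => real_inner_smul_left _ _ _
  constructor
  · -- minimizer ⇒ ‖R‖ ≤ w j
    intro hmin
    by_contra hlt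
    push_neg at hlt
    have hRpos : 0 < ‖R‖ := lt_trans (hw j) hlt
    set d : H := -((‖R‖)⁻¹ • R) with hd
    have hdnorm : ‖d‖ = 1 := by
      rw [hd, norm_neg, norm_smul, norm_inv, norm_norm]
      field_simp
    have hinnerd : ⟪R, d⟫ = -‖R‖ := by
      rw [hd, inner_neg_right, real_inner_smul_right, real_inner_self_eq_norm_sq]
      field_simp
    obtain ⟨ε, hε, hball⟩ := Metric.isOpen_iff.mp isOpen_interior (a j) haj
    set K : ℝ := ∑ i ∈ Finset.univ.erase j, w i / (2 * ‖a j - a i‖) with hKdef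
    have hK0 : 0 ≤ K := Finset.sum_nonneg fun i hi => by
      have := (hw i).le
      positivity
    set t : ℝ := min (ε / 2) ((‖R‖ - w j) / (2 * (K + 1))) with htdef
    have hs : 0 < ‖R‖ - w j := sub_pos.mpr hlt
    have ht0 : 0 < t := lt_min (by positivity) (by positivity)
    set x : H := a j + t • d with hx
    have hxd : ‖t • d‖ = t := by
      rw [norm_smul, hdnorm, mul_one, Real.norm_eq_abs, abs_of_pos ht0]
    have hxC : x ∈ C := by
      apply interior_subset
      apply hball
      rw [Metric.mem_ball, dist_eq_norm, hx]
      have : a j + t • d - a j = t • d := by abel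
      rw [this, hxd]
      calc t ≤ ε / 2 := min_le_left _ _
        _ < ε := by linarith
    -- termwise upper bound
    have hterm : ∀ i ∈ Finset.univ.erase j,
        w i * ‖x - a i‖ ≤ w i * ‖a j - a i‖
          + t * ((w i / ‖a j - a i‖) * ⟪a j - a i, d⟫)
          + t ^ 2 * (w i / (2 * ‖a j - a i‖)) := by
      intro i hi
      have hvne := hne i hi
      have hv' : (0:ℝ) < ‖a j - a i‖ := norm_pos_iff.mpr hvne
      have hxi : x - a i = (a j - a i) + t • d := by rw [hx]; abel
      have hub := norm_add_upper (a j - a i) (t • d) hvne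
      have hinner : ⟪a j - a i, t • d⟫ = t * ⟪a j - a i, d⟫ := real_inner_smul_right _ _ _
      have hnz : ‖t • d‖ ^ 2 = t ^ 2 := by rw [hxd]
      rw [hxi]
      have hwi := (hw i).le
      calc w i * ‖(a j - a i) + t • d‖
          ≤ w i * (‖a j - a i‖ + (⟪a j - a i, t • d⟫ + ‖t • d‖ ^ 2 / 2) / ‖a j - a i‖) :=
            mul_le_mul_of_nonneg_left hub hwi
        _ = w i * ‖a j - a i‖ + t * ((w i / ‖a j - a i‖) * ⟪a j - a i, d⟫)
              + t ^ 2 * (w i / (2 * ‖a j - a i‖)) := by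
            rw [hinner, hnz]
            field_simp
            ring
    have hsum : ∑ i ∈ Finset.univ.erase j, w i * ‖x - a i‖
        ≤ (∑ i ∈ Finset.univ.erase j, w i * ‖a j - a i‖) + t * ⟪R, d⟫ + t ^ 2 * K := by
      rw [hinnerR d, hKdef, Finset.mul_sum, Finset.mul_sum, ← Finset.sum_add_distrib,
        ← Finset.sum_add_distrib]
      exact Finset.sum_le_sum hterm
    have hfx : ∑ i, w i * ‖x - a i‖
        = (∑ i ∈ Finset.univ.erase j, w i * ‖x - a i‖) + w j * ‖x - a j‖ :=
      (Finset.sum_erase_add _ _ (Finset.mem_univ j)).symm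
    have hfaj : ∑ i, w i * ‖a j - a i‖
        = ∑ i ∈ Finset.univ.erase j, w i * ‖a j - a i‖ := by
      rw [← Finset.sum_erase_add _ _ (Finset.mem_univ j)]
      simp only [sub_self, norm_zero, mul_zero, add_zero]
    have hxj : ‖x - a j‖ = t := by
      rw [hx]
      have : a j + t • d - a j = t • d := by abel
      rw [this, hxd]
    have hmin' := isMinOn_iff.mp hmin x hxC
    -- combine
    have hcomb : ∑ i, w i * ‖a j - a i‖ ≤ ∑ i, w i * ‖a j - a i‖
        + t * (-‖R‖) + t ^ 2 * K + w j * t := by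
      calc ∑ i, w i * ‖a j - a i‖ ≤ ∑ i, w i * ‖x - a i‖ := hmin'
        _ = (∑ i ∈ Finset.univ.erase j, w i * ‖x - a i‖) + w j * ‖x - a j‖ := hfx
        _ ≤ (∑ i ∈ Finset.univ.erase j, w i * ‖a j - a i‖) + t * ⟪R, d⟫ + t ^ 2 * K
              + w j * t := by rw [hxj]; linarith
        _ = ∑ i, w i * ‖a j - a i‖ + t * (-‖R‖) + t ^ 2 * K + w j * t := by
              rw [hfaj, hinnerd]
    have ht1 : t * (2 * (K + 1)) ≤ ‖R‖ - w j := by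
      have h := min_le_right (ε / 2) ((‖R‖ - w j) / (2 * (K + 1)))
      rw [← htdef] at h
      calc t * (2 * (K + 1)) ≤ ((‖R‖ - w j) / (2 * (K + 1))) * (2 * (K + 1)) := by
            apply mul_le_mul_of_nonneg_right h; positivity
        _ = ‖R‖ - w j := by field_simp
    nlinarith [mul_pos ht0 hs, mul_le_mul_of_nonneg_left ht1 ht0.le, sq_nonneg t]
  · -- ‖R‖ ≤ w j ⇒ minimizer
    intro hRle
    rw [isMinOn_iff]
    intro x hxC
    show (∑ i, w i * ‖a j - a i‖) ≤ ∑ i, w i * ‖x - a i‖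
    have hterm : ∀ i ∈ Finset.univ.erase j,
        w i * ‖a j - a i‖ + (w i / ‖a j - a i‖) * ⟪a j - a i, x - a j⟫ ≤ w i * ‖x - a i‖ := by
      intro i hi
      have hvne := hne i hi
      have hv' : (0:ℝ) < ‖a j - a i‖ := norm_pos_iff.mpr hvne
      have hlb := norm_add_lower (a j - a i) (x - a j) hvne
      have hxi : (a j - a i) + (x - a j) = x - a i := by abel
      rw [hxi] at hlb
      have hwi := (hw i).le
      have h2 : (w i / ‖a j - a i‖) * ⟪a j - a i, x - a j⟫
          ≤ w i * (‖x - a i‖ - ‖a j - a i‖) := by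
        have := mul_le_mul_of_nonneg_left hlb hwi
        calc (w i / ‖a j - a i‖) * ⟪a j - a i, x - a j⟫
            = w i * ((‖a j - a i‖)⁻¹ * ⟪a j - a i, x - a j⟫) := by ring
          _ ≤ w i * (‖x - a i‖ - ‖a j - a i‖) := this
      linarith
    have hsum : (∑ i ∈ Finset.univ.erase j, w i * ‖a j - a i‖) + ⟪R, x - a j⟫
        ≤ ∑ i ∈ Finset.univ.erase j, w i * ‖x - a i‖ := by
      rw [hinnerR (x - a j), ← Finset.sum_add_distrib]
      exact Finset.sum_le_sum hterm
    have hCS : -(‖R‖ * ‖x - a j‖) ≤ ⟪R, x - a j⟫ := by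
      have := abs_real_inner_le_norm R (x - a j)
      cases abs_le.mp this with
      | intro h1 h2 => linarith
    have hRx : -(w j * ‖x - a j‖) ≤ ⟪R, x - a j⟫ := by
      have h0 : (0:ℝ) ≤ ‖x - a j‖ := norm_nonneg _
      nlinarith
    have hfx : ∑ i, w i * ‖x - a i‖
        = (∑ i ∈ Finset.univ.erase j, w i * ‖x - a i‖) + w j * ‖x - a j‖ :=
      (Finset.sum_erase_add _ _ (Finset.mem_univ j)).symm
    have hfaj : ∑ i, w i * ‖a j - a i‖
        = ∑ i ∈ Finset.univ.erase j, w i * ‖a j - a i‖ := by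
      rw [← Finset.sum_erase_add _ _ (Finset.mem_univ j)]
      simp only [sub_self, norm_zero, mul_zero, add_zero]
    rw [hfx, hfaj]
    linarith
end

section
/- Let Δ be the set of m-tuples a = (a₁,...,aₘ) ∈ Hᵐ of non-collinear points, and let M(a) denote the unique minimizer over C of x ↦ Σᵢ wᵢ‖x - aᵢ‖. Then the solution map M : Δ → H is continuous (in the norm topology): if aᵏ → a in Hᵐ with a, aᵏ ∈ Δ, then M(aᵏ) → M(a). -/
/-!
Every minimizer `x` is the metric projection onto `C` of a point of the convex hull of the
anchors: if `x` is not an anchor, the first-order optimality condition says exactly that `x` is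
the projection of the mean of the anchors with weights `wᵢ / ‖x - bᵢ‖`. Along a convergent
sequence of anchor tuples these hull points stay in a compact set (the closed convex hull of a
totally bounded set), and the projection is `1`-Lipschitz, so every subsequence of the minimizers
has a further subsequence converging to some `p`. Passing to the limit in the minimality
inequalities shows that `p` minimizes the objective of the limit anchors, and this minimizer is
unique when the anchors are not collinear: the objective is strictly smaller at the midpoint of two
minimizers unless every anchor lies on the line through them.
-/

open Finset Filter
open scoped RealInnerProductSpace Topology

section WeightedDistSum

variable {ι E : Type*} [Fintype ι] [SeminormedAddCommGroup E]

def weightedDistSum (w : ι → ℝ) (b : ι → E) (x : E) : ℝ :=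
  ∑ i, w i * ‖x - b i‖

theorem IsMinOn.weightedDistSum_of_tendsto {α : Type*} {l : Filter α} [l.NeBot] {w : ι → ℝ}
    {C : Set E} {b : α → ι → E} {b₀ : ι → E} {x : α → E} {x₀ : E}
    (hmin : ∀ a, IsMinOn (weightedDistSum w (b a)) C (x a))
    (hb : Tendsto b l (𝓝 b₀)) (hx : Tendsto x l (𝓝 x₀)) :
    IsMinOn (weightedDistSum w b₀) C x₀ := by
  have hcont : Continuous fun p : (ι → E) × E => weightedDistSum w p.1 p.2 := by
    unfold weightedDistSum; fun_prop
  intro c hc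
  exact le_of_tendsto_of_tendsto' (hcont.tendsto _ |>.comp (hb.prodMk_nhds hx))
    (hcont.tendsto _ |>.comp (hb.prodMk_nhds tendsto_const_nhds)) fun a => hmin a hc

end WeightedDistSum

theorem totallyBounded_iUnion_range_of_tendsto {ι X : Type*} [Fintype ι] [PseudoMetricSpace X]
    {b : ℕ → ι → X} {b₀ : ι → X} (hb : Tendsto b atTop (𝓝 b₀)) :
    TotallyBounded (⋃ k, Set.range (b k)) := by
  refine (isCompact_iUnion fun i => hb.isCompact_insert_range.image (continuous_apply i))
    |>.totallyBounded.subset ?_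
  rintro _ ⟨_, ⟨k, rfl⟩, i, rfl⟩
  exact Set.mem_iUnion.2 ⟨i, b k, Set.mem_insert_of_mem _ ⟨k, rfl⟩, rfl⟩

section InnerProductSpace

variable {H : Type*} [NormedAddCommGroup H] [InnerProductSpace ℝ H]

/-- The variational characterization of `p` as the metric projection of `q` onto `C`. -/
def IsProjection (C : Set H) (q p : H) : Prop :=
  p ∈ C ∧ ∀ c ∈ C, ⟪q - p, c - p⟫ ≤ 0

theorem exists_isProjection [CompleteSpace H] {C : Set H} (hne : C.Nonempty)
    (hclosed : IsClosed C) (hconv : Convex ℝ C) (q : H) : ∃ p, IsProjection C q p := by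
  obtain ⟨p, hp, hmin⟩ := exists_norm_eq_iInf_of_complete_convex hne hclosed.isComplete hconv q
  exact ⟨p, hp, (norm_eq_iInf_iff_real_inner_le_zero hconv hp).1 hmin⟩

theorem IsProjection.norm_sub_le {C : Set H} {q q' p p' : H} (hp : IsProjection C q p)
    (hp' : IsProjection C q' p') : ‖p - p'‖ ≤ ‖q - q'‖ := by
  have hsq : ‖p - p'‖ ^ 2 ≤ ‖p - p'‖ * ‖q - q'‖ :=
    calc ‖p - p'‖ ^ 2 = ⟪p - p', p - p'⟫ := (real_inner_self_eq_norm_sq _).symm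
      _ ≤ ⟪p - p', q - q'⟫ := by
        have h := add_nonpos (hp.2 p' hp'.1) (hp'.2 p hp.1)
        simp only [inner_sub_left, inner_sub_right, real_inner_comm] at h ⊢
        linarith
      _ ≤ ‖p - p'‖ * ‖q - q'‖ := real_inner_le_norm _ _
  rcases (norm_nonneg (p - p')).eq_or_lt with h | h
  · rw [← h]; positivity
  · exact le_of_mul_le_mul_left (by rwa [sq] at hsq) h

theorem IsProjection.tendsto {α : Type*} {l : Filter α} {C : Set H} {q : α → H} {q₀ : H}
    {p : α → H} {p₀ : H} (hp : ∀ a, IsProjection C (q a) (p a)) (hp₀ : IsProjection C q₀ p₀)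
    (hq : Tendsto q l (𝓝 q₀)) : Tendsto p l (𝓝 p₀) := by
  rw [tendsto_iff_norm_sub_tendsto_zero] at hq ⊢
  exact squeeze_zero (fun _ => norm_nonneg _) (fun a => (hp a).norm_sub_le hp₀) hq

theorem hasFDerivAt_norm_sub {x b : H} (h : x ≠ b) :
    HasFDerivAt (fun y => ‖y - b‖) (innerSL ℝ (‖x - b‖⁻¹ • (x - b))) x := by
  have hpos : 0 < ‖x - b‖ := norm_pos_iff.2 (sub_ne_zero.2 h)
  have := (((hasFDerivAt_id x).sub_const b).norm_sq).sqrt (by positivity)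
  simp only [Real.sqrt_sq (norm_nonneg _)] at this
  refine this.congr_fderiv ?_
  ext v
  simp
  field_simp

theorem exists_eq_add_smul_of_sameRay {x y p : H} (hxy : x ≠ y)
    (h : SameRay ℝ (x - p) (y - p)) : ∃ t : ℝ, p = x + t • (y - x) := by
  rcases eq_or_ne (x - p) 0 with hxp | hxp
  · exact ⟨0, by rw [zero_smul, add_zero, ← sub_eq_zero, ← neg_sub, hxp, neg_zero]⟩
  obtain ⟨r, -, hr⟩ := h.exists_nonneg_left hxp
  have hr1 : 1 - r ≠ 0 := by
    rintro hr1
    rw [← sub_eq_zero.1 hr1, one_smul, sub_left_inj] at hr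
    exact hxy hr
  refine ⟨(1 - r)⁻¹, ?_⟩
  have hyx : y - x = -(1 - r) • (x - p) := by rw [neg_smul, sub_smul, one_smul, hr]; abel
  rw [hyx, smul_smul, mul_neg, inv_mul_cancel₀ hr1, neg_one_smul]
  abel

theorem norm_midpoint_sub (x y p : H) : ‖midpoint ℝ x y - p‖ = ‖(x - p) + (y - p)‖ / 2 := by
  rw [midpoint_eq_smul_add, invOf_eq_inv,
    show (2 : ℝ)⁻¹ • (x + y) - p = (2 : ℝ)⁻¹ • ((x - p) + (y - p)) by module, norm_smul,
    Real.norm_of_nonneg (by norm_num), inv_mul_eq_div]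

variable {ι : Type*} [Fintype ι]

theorem hasFDerivAt_weightedDistSum (w : ι → ℝ) {b : ι → H} {x : H} (hx : ∀ i, x ≠ b i) :
    HasFDerivAt (weightedDistSum w b)
      (innerSL ℝ (∑ i, (w i / ‖x - b i‖) • (x - b i))) x := by
  have := HasFDerivAt.fun_sum (u := univ) fun i _ =>
    (hasFDerivAt_norm_sub (hx i)).const_mul (w i)
  refine this.congr_fderiv ?_
  simp only [map_sum, map_smul, smul_smul, div_eq_mul_inv]

theorem IsMinOn.inner_gradient_weightedDistSum_nonneg {w : ι → ℝ} {b : ι → H} {C : Set H}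
    {x c : H} (hmin : IsMinOn (weightedDistSum w b) C x) (hC : Convex ℝ C) (hx : x ∈ C)
    (hc : c ∈ C) (hxb : ∀ i, x ≠ b i) :
    0 ≤ ⟪∑ i, (w i / ‖x - b i‖) • (x - b i), c - x⟫ :=
  hmin.localize.hasFDerivWithinAt_nonneg (hasFDerivAt_weightedDistSum w hxb).hasFDerivWithinAt
    (sub_mem_posTangentConeAt_of_segment_subset (hC.segment_subset hx hc))

theorem IsMinOn.exists_mem_convexHull_isProjection [Nonempty ι] {w : ι → ℝ}
    (hw : ∀ i, 0 < w i) {b : ι → H} {C : Set H} {x : H}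
    (hmin : IsMinOn (weightedDistSum w b) C x) (hC : Convex ℝ C) (hx : x ∈ C) :
    ∃ q ∈ convexHull ℝ (Set.range b), IsProjection C q x := by
  by_cases hxb : ∃ j, x = b j
  · obtain ⟨j, rfl⟩ := hxb
    exact ⟨b j, subset_convexHull ℝ _ ⟨j, rfl⟩, hx, fun c _ => by simp⟩
  push Not at hxb
  set μ : ι → ℝ := fun i => w i / ‖x - b i‖
  have hμ : ∀ i, 0 < μ i := fun i => div_pos (hw i) (norm_pos_iff.2 (sub_ne_zero.2 (hxb i)))
  have hW : 0 < ∑ i, μ i := sum_pos (fun i _ => hμ i) univ_nonempty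
  refine ⟨univ.centerMass μ b, univ.centerMass_mem_convexHull (fun i _ => (hμ i).le) hW
    (fun i _ => ⟨i, rfl⟩), hx, fun c hc => ?_⟩
  -- The gradient of the objective at `x` is a negative multiple of `centerMass μ b - x`.
  have hgrad : univ.centerMass μ b - x = -(∑ i, μ i)⁻¹ • ∑ i, μ i • (x - b i) := by
    have hsum : ∑ i, μ i • (x - b i) = (∑ i, μ i) • x - ∑ i, μ i • b i := by
      simp only [smul_sub, sum_sub_distrib, sum_smul]
    rw [hsum, centerMass, neg_smul, smul_sub, smul_smul, inv_mul_cancel₀ hW.ne', one_smul,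
      neg_sub]
  rw [hgrad, real_inner_smul_left, neg_mul]
  exact neg_nonpos.2 (mul_nonneg (inv_nonneg.2 hW.le)
    (hmin.inner_gradient_weightedDistSum_nonneg hC hx hc hxb))

theorem weightedDistSum_midpoint_lt {w : ι → ℝ} (hw : ∀ i, 0 < w i) {b : ι → H} {x y : H}
    (h : ∃ i, ¬ SameRay ℝ (x - b i) (y - b i)) :
    weightedDistSum w b (midpoint ℝ x y) <
      (weightedDistSum w b x + weightedDistSum w b y) / 2 := by
  obtain ⟨j, hj⟩ := h
  simp only [weightedDistSum, ← sum_add_distrib, sum_div]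
  refine sum_lt_sum (fun i _ => ?_) ⟨j, mem_univ j, ?_⟩
  · rw [norm_midpoint_sub]
    have := mul_le_mul_of_nonneg_left (norm_add_le (x - b i) (y - b i)) (hw i).le
    linarith
  · rw [norm_midpoint_sub]
    have := mul_lt_mul_of_pos_left (norm_add_lt_of_not_sameRay hj) (hw j)
    linarith

theorem IsMinOn.eq_of_weightedDistSum {w : ι → ℝ} (hw : ∀ i, 0 < w i) {b : ι → H}
    (hb : ¬ ∃ u v : H, ∀ i, ∃ t : ℝ, b i = u + t • v) {C : Set H} (hC : Convex ℝ C)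
    {x y : H} (hx : x ∈ C) (hy : y ∈ C) (hminx : IsMinOn (weightedDistSum w b) C x)
    (hminy : IsMinOn (weightedDistSum w b) C y) : x = y := by
  by_contra hxy
  have hray : ∀ i, SameRay ℝ (x - b i) (y - b i) := by
    by_contra! h
    linarith [weightedDistSum_midpoint_lt hw h, isMinOn_iff.1 hminx _ (hC.midpoint_mem hx hy),
      isMinOn_iff.1 hminx _ hy, isMinOn_iff.1 hminy _ hx]
  exact hb ⟨x, y - x, fun i => exists_eq_add_smul_of_sameRay hxy (hray i)⟩

end InnerProductSpace

theorem solution_map_continuous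
    {H : Type*} [NormedAddCommGroup H] [InnerProductSpace ℝ H] [CompleteSpace H]
    {m : ℕ} (hm : 1 ≤ m) (w : Fin m → ℝ) (hw : ∀ i, 0 < w i)
    (C : Set H) (hCne : C.Nonempty) (hCclosed : IsClosed C) (hCconv : Convex ℝ C)
    (M : (Fin m → H) → H)
    (hM : ∀ b : Fin m → H, (¬ ∃ u v : H, ∀ i, ∃ t : ℝ, b i = u + t • v) →
      M b ∈ C ∧ IsMinOn (fun x => ∑ i, w i * ‖x - b i‖) C (M b))
    (a : Fin m → H) (ha : ¬ ∃ u v : H, ∀ i, ∃ t : ℝ, a i = u + t • v)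
    (aseq : ℕ → (Fin m → H))
    (haseq : ∀ k, ¬ ∃ u v : H, ∀ i, ∃ t : ℝ, aseq k i = u + t • v)
    (hconv : Tendsto aseq atTop (𝓝 a)) :
    Tendsto (fun k => M (aseq k)) atTop (𝓝 (M a)) := by
  have : Nonempty (Fin m) := Fin.pos_iff_nonempty.1 hm
  have hMk := fun k => hM (aseq k) (haseq k)
  choose q hq_hull hq_proj using fun k =>
    (hMk k).2.exists_mem_convexHull_isProjection hw hCconv (hMk k).1
  set K := closure (convexHull ℝ (⋃ k, Set.range (aseq k)))
  have hK : IsCompact K :=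
    (totallyBounded_convexHull.2 (totallyBounded_iUnion_range_of_tendsto hconv)).closure
      |>.isCompact_of_isClosed isClosed_closure
  have hqK : ∀ k, q k ∈ K := fun k =>
    subset_closure (convexHull_mono (Set.subset_iUnion _ k) (hq_hull k))
  refine tendsto_of_subseq_tendsto fun ns hns => ?_
  obtain ⟨q₀, -, φ, hφ, hq₀⟩ := hK.tendsto_subseq fun n => hqK (ns n)
  obtain ⟨p₀, hp₀⟩ := exists_isProjection hCne hCclosed hCconv q₀
  have hp_tendsto : Tendsto (fun n => M (aseq (ns (φ n)))) atTop (𝓝 p₀) :=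
    IsProjection.tendsto (fun n => hq_proj (ns (φ n))) hp₀ hq₀
  have hp₀_min : IsMinOn (weightedDistSum w a) C p₀ :=
    IsMinOn.weightedDistSum_of_tendsto (fun n => (hMk (ns (φ n))).2)
      (hconv.comp (hns.comp hφ.tendsto_atTop)) hp_tendsto
  obtain ⟨hMa, hMa_min⟩ := hM a ha
  exact ⟨φ, hp₀_min.eq_of_weightedDistSum hw ha hCconv hp₀.1 hMa hMa_min ▸ hp_tendsto⟩
end

section
/- Let x_k ∈ C with x_k ∉ {a₁,...,aₘ} and define h(x, x_k) = Σᵢ wᵢ‖x - aᵢ‖²/‖x_k - aᵢ‖. Then: (i) h(x_k, x_k) = f(x_k); (ii) for the next iterate x_{k+1} = Π_C(T(x_k)), h(x_{k+1}, x_k) ≥ 2f(x_{k+1}) - f(x_k); and (iii) x_{k+1} is the unique minimizer of h(·, x_k) over C. -/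
open Finset
open scoped RealInnerProductSpace

theorem auxiliary_majorizer_properties
    {H : Type*} [NormedAddCommGroup H] [InnerProductSpace ℝ H] [CompleteSpace H]
    {m : ℕ} (hm : 1 ≤ m) (a : Fin m → H) (w : Fin m → ℝ) (hw : ∀ i, 0 < w i)
    (C : Set H) (hCne : C.Nonempty) (hCclosed : IsClosed C) (hCconv : Convex ℝ C)
    (proj : H → H)
    (hproj : ∀ x : H, proj x ∈ C ∧ ∀ z ∈ C, ⟪x - proj x, z - proj x⟫ ≤ 0)
    (xk : H) (hxkC : xk ∈ C) (hxkA : xk ∉ Set.range a) :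
    (∑ i, w i * ‖xk - a i‖ ^ 2 / ‖xk - a i‖) = (∑ i, w i * ‖xk - a i‖) ∧
    (∑ i, w i * ‖proj (weiszfeldT w a xk) - a i‖ ^ 2 / ‖xk - a i‖) ≥
      2 * (∑ i, w i * ‖proj (weiszfeldT w a xk) - a i‖) - ∑ i, w i * ‖xk - a i‖ ∧
    (IsMinOn (fun x => ∑ i, w i * ‖x - a i‖ ^ 2 / ‖xk - a i‖) C (proj (weiszfeldT w a xk)) ∧
      ∀ y ∈ C, IsMinOn (fun x => ∑ i, w i * ‖x - a i‖ ^ 2 / ‖xk - a i‖) C y →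
        y = proj (weiszfeldT w a xk)) := by
  have hne : ∀ i, ‖xk - a i‖ ≠ 0 := by
    intro i h
    rw [norm_eq_zero, sub_eq_zero] at h
    exact hxkA ⟨i, h.symm⟩
  have hpos : ∀ i, 0 < ‖xk - a i‖ := fun i =>
    lt_of_le_of_ne (norm_nonneg _) (Ne.symm (hne i))
  set c : Fin m → ℝ := fun i => w i / ‖xk - a i‖ with hc
  have hcpos : ∀ i, 0 < c i := fun i => div_pos (hw i) (hpos i)
  set S : ℝ := ∑ i, c i with hSdef
  have hS : 0 < S := Finset.sum_pos (fun i _ => hcpos i)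
    (Finset.univ_nonempty_iff.2 (Fin.pos_iff_nonempty.1 hm))
  set p : H := weiszfeldT w a xk with hpdef
  have hSp : S • p = ∑ i, c i • a i := by
    rw [hpdef, weiszfeldT, smul_smul, mul_inv_cancel₀ hS.ne', one_smul]
  have hg : ∀ (x : H) (i : Fin m), w i * ‖x - a i‖ ^ 2 / ‖xk - a i‖ = c i * ‖x - a i‖ ^ 2 := by
    intro x i; rw [hc]; ring
  have key : ∀ x : H, (∑ i, w i * ‖x - a i‖ ^ 2 / ‖xk - a i‖)
      = S * ‖x - p‖ ^ 2 + (∑ i, c i * ‖a i‖ ^ 2 - S * ‖p‖ ^ 2) := by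
    intro x
    simp_rw [hg x]
    have e1 : (∑ i, c i) * ‖x‖ ^ 2 - 2 * ⟪x, ∑ i, c i • a i⟫ + ∑ i, c i * ‖a i‖ ^ 2
        = ∑ i, c i * ‖x - a i‖ ^ 2 := by
      rw [inner_sum, Finset.sum_mul, Finset.mul_sum, ← Finset.sum_sub_distrib,
        ← Finset.sum_add_distrib]
      refine Finset.sum_congr rfl fun i _ => ?_
      rw [real_inner_smul_right, norm_sub_sq_real]; ring
    rw [← e1, ← hSp, real_inner_smul_right, norm_sub_sq_real, ← hSdef]
    ring
  set q : H := proj p with hqdef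
  obtain ⟨hqC, hq⟩ := hproj p
  have hdist : ∀ z ∈ C, ‖z - q‖ ^ 2 + ‖q - p‖ ^ 2 ≤ ‖z - p‖ ^ 2 := by
    intro z hz
    have h1 := hq z hz
    have h2 : z - p = (z - q) + (q - p) := by abel
    have h3 : ‖z - p‖ ^ 2 = ‖z - q‖ ^ 2 + 2 * ⟪z - q, q - p⟫ + ‖q - p‖ ^ 2 := by
      rw [h2, norm_add_sq_real]
    have h4 : ⟪z - q, q - p⟫ = -⟪p - q, z - q⟫ := by
      rw [← inner_neg_left, neg_sub]; exact (real_inner_comm _ _)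
    nlinarith
  refine ⟨?_, ?_, ?_, ?_⟩
  · refine Finset.sum_congr rfl fun i _ => ?_
    rw [sq, mul_div_assoc, mul_div_assoc, div_self (hne i), mul_one]
  · rw [Finset.mul_sum, ← Finset.sum_sub_distrib]
    refine Finset.sum_le_sum fun i _ => ?_
    rw [le_div_iff₀ (hpos i)]
    nlinarith [mul_nonneg (hw i).le (sq_nonneg (‖proj (weiszfeldT w a xk) - a i‖ - ‖xk - a i‖))]
  · intro z hz
    simp only [Set.mem_setOf_eq]
    rw [key, key]
    have := hdist z hz
    have hzq := sq_nonneg ‖z - q‖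
    nlinarith
  · intro y hyC hymin
    have h1 : (∑ i, w i * ‖y - a i‖ ^ 2 / ‖xk - a i‖) ≤
        (∑ i, w i * ‖q - a i‖ ^ 2 / ‖xk - a i‖) := hymin hqC
    rw [key, key] at h1
    have h2 : ‖y - p‖ ^ 2 ≤ ‖q - p‖ ^ 2 := by nlinarith
    have h3 := hdist y hyC
    have h4 : ‖y - q‖ ^ 2 ≤ 0 := by nlinarith
    have h5 : ‖y - q‖ = 0 := by nlinarith [sq_nonneg ‖y - q‖, norm_nonneg (y - q)]
    have := norm_eq_zero.1 h5
    rw [sub_eq_zero] at this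
    exact this
end

section
/- For the projected Weiszfeld iteration x_{k+1} = Π_C(T(x_k)) with x_k ∈ C \ {a₁,...,aₘ}, the objective decreases: f(x_{k+1}) ≤ f(x_k); moreover f(x_{k+1}) = f(x_k) if and only if x_{k+1} = x_k. -/
open Finset
open scoped RealInnerProductSpace

/-! With `η i = w i / ‖x - a i‖`, the majorizer `h(·, x) = ∑ η i ‖· - a i‖²` of the Weber
objective `f` touches it at `x` and satisfies `h(y, x) ≥ 2 f(y) - f(x)` (AM-GM). Being a
quadratic with centre `T x`, it equals `(∑ η i) ‖· - T x‖²` up to a constant, so projecting `T x`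
onto `C` lowers it by at least `(∑ η i) ‖x - Π_C (T x)‖²` below `h(x, x) = f(x)`. Hence
`f(x₊) + (∑ η i) / 2 ‖x - x₊‖² ≤ f(x)` for `x₊ = Π_C (T x)`. -/

theorem norm_sub_pos_of_notMem_range {ι E : Type*} [NormedAddCommGroup E] {a : ι → E} {x : E}
    (hx : x ∉ Set.range a) (i : ι) : 0 < ‖x - a i‖ :=
  norm_pos_iff.mpr (sub_ne_zero.mpr fun h => hx ⟨i, h.symm⟩)

section Majorizer

variable {E : Type*} [NormedAddCommGroup E] {m : ℕ} (w : Fin m → ℝ) (a : Fin m → E)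

noncomputable def weberObjective (y : E) : ℝ :=
  ∑ i, w i * ‖y - a i‖

noncomputable def weiszfeldMajorizer (y x : E) : ℝ :=
  ∑ i, w i / ‖x - a i‖ * ‖y - a i‖ ^ 2

variable {w a}

theorem sum_div_norm_sub_pos [Nonempty (Fin m)] (hw : ∀ i, 0 < w i) {x : E}
    (hx : x ∉ Set.range a) : 0 < ∑ i, w i / ‖x - a i‖ :=
  sum_pos (fun i _ => div_pos (hw i) (norm_sub_pos_of_notMem_range hx i)) univ_nonempty

theorem weiszfeldMajorizer_self {x : E} (hx : x ∉ Set.range a) :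
    weiszfeldMajorizer w a x x = weberObjective w a x := by
  refine sum_congr rfl fun i _ => ?_
  have hd := (norm_sub_pos_of_notMem_range hx i).ne'
  field_simp

theorem two_mul_weberObjective_le (hw : ∀ i, 0 ≤ w i) {x : E} (hx : x ∉ Set.range a) (y : E) :
    2 * weberObjective w a y ≤ weiszfeldMajorizer w a y x + weberObjective w a x := by
  rw [weberObjective, weberObjective, weiszfeldMajorizer, mul_sum, ← sum_add_distrib]
  refine sum_le_sum fun i _ => ?_
  have hd := norm_sub_pos_of_notMem_range hx i
  have hsq : 0 ≤ w i / ‖x - a i‖ * (‖y - a i‖ - ‖x - a i‖) ^ 2 :=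
    mul_nonneg (div_nonneg (hw i) hd.le) (sq_nonneg _)
  have hexpand : w i / ‖x - a i‖ * (‖y - a i‖ - ‖x - a i‖) ^ 2
      = w i / ‖x - a i‖ * ‖y - a i‖ ^ 2 + w i * ‖x - a i‖ - 2 * (w i * ‖y - a i‖) := by
    field_simp
    ring
  linarith

end Majorizer

section

variable {H : Type*} [NormedAddCommGroup H] [InnerProductSpace ℝ H]

theorem sum_mul_norm_sub_sq_sub_sum_mul_norm_sub_sq {ι : Type*} (s : Finset ι) (η : ι → ℝ)
    (a : ι → H) {c : H} (hc : (∑ i ∈ s, η i) • c = ∑ i ∈ s, η i • a i) (y z : H) :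
    ∑ i ∈ s, η i * ‖y - a i‖ ^ 2 - ∑ i ∈ s, η i * ‖z - a i‖ ^ 2
      = (∑ i ∈ s, η i) * (‖y - c‖ ^ 2 - ‖z - c‖ ^ 2) := by
  have hinner : ∑ i ∈ s, η i * ⟪y - z, a i⟫ = (∑ i ∈ s, η i) * ⟪y - z, c⟫ := by
    rw [← real_inner_smul_right, hc, inner_sum]
    simp only [real_inner_smul_right]
  calc ∑ i ∈ s, η i * ‖y - a i‖ ^ 2 - ∑ i ∈ s, η i * ‖z - a i‖ ^ 2
      = ∑ i ∈ s, (η i * (‖y‖ ^ 2 - ‖z‖ ^ 2) - 2 * (η i * ⟪y - z, a i⟫)) := by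
        rw [← sum_sub_distrib]
        refine sum_congr rfl fun i _ => ?_
        rw [norm_sub_sq_real, norm_sub_sq_real, inner_sub_left]
        ring
    _ = (∑ i ∈ s, η i) * (‖y‖ ^ 2 - ‖z‖ ^ 2) - 2 * ∑ i ∈ s, η i * ⟪y - z, a i⟫ := by
        rw [sum_sub_distrib, ← sum_mul, ← mul_sum]
    _ = (∑ i ∈ s, η i) * (‖y - c‖ ^ 2 - ‖z - c‖ ^ 2) := by
        rw [hinner, norm_sub_sq_real, norm_sub_sq_real, inner_sub_left]
        ring

theorem norm_sub_sq_add_norm_sub_sq_le_of_inner_nonpos {x p z : H}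
    (h : ⟪x - p, z - p⟫ ≤ 0) : ‖p - x‖ ^ 2 + ‖z - p‖ ^ 2 ≤ ‖z - x‖ ^ 2 := by
  have hzx : z - x = (z - p) + (p - x) := by abel
  have hinner : ⟪z - p, p - x⟫ = -⟪x - p, z - p⟫ := by
    rw [real_inner_comm, ← inner_neg_left, neg_sub]
  rw [hzx, norm_add_sq_real, hinner]
  linarith

variable {m : ℕ} {w : Fin m → ℝ} {a : Fin m → H}

theorem sum_smul_weiszfeldT {x : H} (hS : ∑ i, w i / ‖x - a i‖ ≠ 0) :
    (∑ i, w i / ‖x - a i‖) • weiszfeldT w a x = ∑ i, (w i / ‖x - a i‖) • a i := by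
  rw [weiszfeldT, smul_smul, mul_inv_cancel₀ hS, one_smul]

theorem weiszfeldMajorizer_sub {x : H} (hS : ∑ i, w i / ‖x - a i‖ ≠ 0) (y z : H) :
    weiszfeldMajorizer w a y x - weiszfeldMajorizer w a z x
      = (∑ i, w i / ‖x - a i‖)
        * (‖y - weiszfeldT w a x‖ ^ 2 - ‖z - weiszfeldT w a x‖ ^ 2) :=
  sum_mul_norm_sub_sq_sub_sum_mul_norm_sub_sq _ _ _ (sum_smul_weiszfeldT hS) y z

theorem weberObjective_add_le [Nonempty (Fin m)] (hw : ∀ i, 0 < w i) {x p : H}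
    (hx : x ∉ Set.range a) (hp : ⟪weiszfeldT w a x - p, x - p⟫ ≤ 0) :
    weberObjective w a p + (∑ i, w i / ‖x - a i‖) / 2 * ‖x - p‖ ^ 2
      ≤ weberObjective w a x := by
  have hS := sum_div_norm_sub_pos hw hx
  have hmaj := two_mul_weberObjective_le (fun i => (hw i).le) hx p
  have hself := weiszfeldMajorizer_self (w := w) hx
  have hsub := weiszfeldMajorizer_sub hS.ne' p x
  have hproj := mul_le_mul_of_nonneg_left
    (norm_sub_sq_add_norm_sub_sq_le_of_inner_nonpos hp) hS.le
  linarith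

end

theorem projected_weiszfeld_descent_general
    {H : Type*} [NormedAddCommGroup H] [InnerProductSpace ℝ H]
    {m : ℕ} (hm : 1 ≤ m) (a : Fin m → H) (w : Fin m → ℝ) (hw : ∀ i, 0 < w i)
    (C : Set H)
    (proj : H → H)
    (hproj : ∀ x : H, proj x ∈ C ∧ ∀ z ∈ C, ⟪x - proj x, z - proj x⟫ ≤ 0)
    (xk : H) (hxkC : xk ∈ C) (hxkA : xk ∉ Set.range a) :
    (∑ i, w i * ‖proj (weiszfeldT w a xk) - a i‖) ≤ (∑ i, w i * ‖xk - a i‖) ∧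
      ((∑ i, w i * ‖proj (weiszfeldT w a xk) - a i‖) = (∑ i, w i * ‖xk - a i‖) ↔
        proj (weiszfeldT w a xk) = xk) := by
  have : Nonempty (Fin m) := ⟨⟨0, hm⟩⟩
  set p := proj (weiszfeldT w a xk)
  have hS := sum_div_norm_sub_pos hw hxkA
  have key : weberObjective w a p + (∑ i, w i / ‖xk - a i‖) / 2 * ‖xk - p‖ ^ 2
      ≤ weberObjective w a xk :=
    weberObjective_add_le hw hxkA ((hproj _).2 xk hxkC)
  simp only [weberObjective] at key
  have hgap : 0 ≤ (∑ i, w i / ‖xk - a i‖) / 2 * ‖xk - p‖ ^ 2 := by positivity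
  refine ⟨by linarith, fun heq => ?_, fun heq => by rw [heq]⟩
  have hzero : (∑ i, w i / ‖xk - a i‖) / 2 * ‖xk - p‖ ^ 2 = 0 := by
    linarith
  have hnorm : ‖xk - p‖ = 0 := by simpa [hS.ne'] using hzero
  exact (norm_sub_eq_zero_iff.mp hnorm).symm

theorem projected_weiszfeld_descent
    {H : Type*} [NormedAddCommGroup H] [InnerProductSpace ℝ H] [CompleteSpace H]
    {m : ℕ} (hm : 1 ≤ m) (a : Fin m → H) (w : Fin m → ℝ) (hw : ∀ i, 0 < w i)
    (hcol : ¬ ∃ u v : H, ∀ i, ∃ t : ℝ, a i = u + t • v)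
    (C : Set H) (hCne : C.Nonempty) (hCclosed : IsClosed C) (hCconv : Convex ℝ C)
    (proj : H → H)
    (hproj : ∀ x : H, proj x ∈ C ∧ ∀ z ∈ C, ⟪x - proj x, z - proj x⟫ ≤ 0)
    (xk : H) (hxkC : xk ∈ C) (hxkA : xk ∉ Set.range a) :
    (∑ i, w i * ‖proj (weiszfeldT w a xk) - a i‖) ≤ (∑ i, w i * ‖xk - a i‖) ∧
      ((∑ i, w i * ‖proj (weiszfeldT w a xk) - a i‖) = (∑ i, w i * ‖xk - a i‖) ↔
        proj (weiszfeldT w a xk) = xk) :=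
  projected_weiszfeld_descent_general hm a w hw C proj hproj xk hxkC hxkA
end

section
/- For the projected Weiszfeld iteration, with L(x_k) = Σᵢ wᵢ/‖x_k - aᵢ‖, the inequality f(x_{k+1}) ≤ f(x_k) + (L(x_k)/2)[‖x_{k+1} - x_k‖² + 2⟨x_k - T(x_k), x_{k+1} - x_k⟩] holds whenever x_k ∈ C \ {a₁,...,aₘ}. -/
open Finset
open scoped RealInnerProductSpace

theorem projected_weiszfeld_descent_inequality
    {H : Type*} [NormedAddCommGroup H] [InnerProductSpace ℝ H] [CompleteSpace H]
    {m : ℕ} (hm : 1 ≤ m) (a : Fin m → H) (w : Fin m → ℝ) (hw : ∀ i, 0 < w i)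
    (C : Set H) (hCne : C.Nonempty) (hCclosed : IsClosed C) (hCconv : Convex ℝ C)
    (proj : H → H)
    (hproj : ∀ x : H, proj x ∈ C ∧ ∀ z ∈ C, ⟪x - proj x, z - proj x⟫ ≤ 0)
    (xk : H) (hxkC : xk ∈ C) (hxkA : xk ∉ Set.range a) :
    (∑ i, w i * ‖proj (weiszfeldT w a xk) - a i‖) ≤
      (∑ i, w i * ‖xk - a i‖) +
        (∑ i, w i / ‖xk - a i‖) / 2 *
          (‖proj (weiszfeldT w a xk) - xk‖ ^ 2 +
            2 * ⟪xk - weiszfeldT w a xk, proj (weiszfeldT w a xk) - xk⟫) := by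
  set y := proj (weiszfeldT w a xk) with hy
  have hs : ∀ i, 0 < ‖xk - a i‖ := by
    intro i
    rw [norm_pos_iff, sub_ne_zero]
    exact fun h => hxkA ⟨i, h.symm⟩
  set L : ℝ := ∑ i, w i / ‖xk - a i‖ with hL
  have hLpos : 0 < L := by
    have : Nonempty (Fin m) := Fin.pos_iff_nonempty.mp hm
    exact Finset.sum_pos (fun i _ => div_pos (hw i) (hs i)) Finset.univ_nonempty
  -- pointwise AM-GM: 2 w t ≤ w s + (w/s) t²
  have key : ∀ i, 2 * (w i * ‖y - a i‖) ≤
      w i * ‖xk - a i‖ + w i / ‖xk - a i‖ * ‖y - a i‖ ^ 2 := by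
    intro i
    have h := hs i
    have h1 : 2 * ‖y - a i‖ - ‖xk - a i‖ ≤ ‖y - a i‖ ^ 2 / ‖xk - a i‖ := by
      rw [le_div_iff₀ h]
      nlinarith [sq_nonneg (‖y - a i‖ - ‖xk - a i‖)]
    have h2 : w i / ‖xk - a i‖ * ‖y - a i‖ ^ 2 = w i * (‖y - a i‖ ^ 2 / ‖xk - a i‖) := by
      ring
    nlinarith [mul_le_mul_of_nonneg_left h1 (hw i).le]
  have sum_key : 2 * ∑ i, w i * ‖y - a i‖ ≤
      (∑ i, w i * ‖xk - a i‖) + ∑ i, w i / ‖xk - a i‖ * ‖y - a i‖ ^ 2 := by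
    rw [Finset.mul_sum, ← Finset.sum_add_distrib]
    exact Finset.sum_le_sum fun i _ => key i
  -- expansion of the surrogate
  have hsum_vec : ∑ i, (w i / ‖xk - a i‖) • (xk - a i) = L • (xk - weiszfeldT w a xk) := by
    rw [smul_sub]
    have hT : L • weiszfeldT w a xk = ∑ i, (w i / ‖xk - a i‖) • a i := by
      rw [weiszfeldT, smul_smul, mul_inv_cancel₀ (ne_of_gt hLpos), one_smul]
    rw [hT]
    simp only [smul_sub]
    rw [Finset.sum_sub_distrib, ← Finset.sum_smul]
  have expand : ∑ i, w i / ‖xk - a i‖ * ‖y - a i‖ ^ 2 =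
      L * ‖y - xk‖ ^ 2 + 2 * (L * ⟪xk - weiszfeldT w a xk, y - xk⟫) +
        ∑ i, w i * ‖xk - a i‖ := by
    have hterm : ∀ i, w i / ‖xk - a i‖ * ‖y - a i‖ ^ 2 =
        w i / ‖xk - a i‖ * ‖y - xk‖ ^ 2 +
          2 * ⟪y - xk, (w i / ‖xk - a i‖) • (xk - a i)⟫ + w i * ‖xk - a i‖ := by
      intro i
      have hd : ‖y - a i‖ ^ 2 = ‖y - xk‖ ^ 2 + 2 * ⟪y - xk, xk - a i⟫ + ‖xk - a i‖ ^ 2 := by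
        have := norm_add_sq_real (y - xk) (xk - a i)
        rw [sub_add_sub_cancel] at this
        exact this
      have hns : ‖xk - a i‖ ≠ 0 := (hs i).ne'
      rw [hd, real_inner_smul_right]
      field_simp
    rw [Finset.sum_congr rfl fun i _ => hterm i]
    rw [Finset.sum_add_distrib, Finset.sum_add_distrib]
    congr 1
    congr 1
    · rw [← Finset.sum_mul]
    · rw [← Finset.mul_sum, ← inner_sum, hsum_vec, real_inner_smul_right,
        real_inner_comm]
  have final : 2 * ∑ i, w i * ‖y - a i‖ ≤
      2 * (∑ i, w i * ‖xk - a i‖) + L * ‖y - xk‖ ^ 2 +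
        2 * (L * ⟪xk - weiszfeldT w a xk, y - xk⟫) := by
    rw [expand] at sum_key
    linarith
  have hrw : (∑ i, w i * ‖xk - a i‖) + L / 2 *
      (‖y - xk‖ ^ 2 + 2 * ⟪xk - weiszfeldT w a xk, y - xk⟫) =
      (2 * (∑ i, w i * ‖xk - a i‖) + L * ‖y - xk‖ ^ 2 +
        2 * (L * ⟪xk - weiszfeldT w a xk, y - xk⟫)) / 2 := by
    ring
  rw [hrw]
  linarith
end

section
/- For the projected Weiszfeld iteration and any x ∈ C, f(x_{k+1}) - f(x) ≤ (L(x_k)/2)(‖x_k - x‖² - ‖x_{k+1} - x‖²), where L(x_k) = Σᵢ wᵢ/‖x_k - aᵢ‖ and x_k ∈ C \ {a₁,...,aₘ}. -/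
open Finset
open scoped RealInnerProductSpace

theorem projected_weiszfeld_key_inequality
    {H : Type*} [NormedAddCommGroup H] [InnerProductSpace ℝ H] [CompleteSpace H]
    {m : ℕ} (hm : 1 ≤ m) (a : Fin m → H) (w : Fin m → ℝ) (hw : ∀ i, 0 < w i)
    (C : Set H) (hCne : C.Nonempty) (hCclosed : IsClosed C) (hCconv : Convex ℝ C)
    (proj : H → H)
    (hproj : ∀ x : H, proj x ∈ C ∧ ∀ z ∈ C, ⟪x - proj x, z - proj x⟫ ≤ 0)
    (xk : H) (hxkC : xk ∈ C) (hxkA : xk ∉ Set.range a)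
    (x : H) (hx : x ∈ C) :
    (∑ i, w i * ‖proj (weiszfeldT w a xk) - a i‖) - (∑ i, w i * ‖x - a i‖) ≤
      (∑ i, w i / ‖xk - a i‖) / 2 *
        (‖xk - x‖ ^ 2 - ‖proj (weiszfeldT w a xk) - x‖ ^ 2) := by
  set T := weiszfeldT w a xk with hT
  set y := proj T with hy
  have hd : ∀ i, 0 < ‖xk - a i‖ := by
    intro i
    rw [norm_pos_iff, sub_ne_zero]
    exact fun h => hxkA ⟨i, h.symm⟩
  set α : Fin m → ℝ := fun i => w i / ‖xk - a i‖ with hα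
  have hαpos : ∀ i, 0 < α i := fun i => div_pos (hw i) (hd i)
  have hαd : ∀ i, α i * ‖xk - a i‖ = w i := by
    intro i; exact div_mul_cancel₀ (w i) (hd i).ne'
  set L : ℝ := ∑ i, α i with hL
  have hLpos : 0 < L :=
    Finset.sum_pos (fun i _ => hαpos i) ⟨⟨0, hm⟩, Finset.mem_univ _⟩
  have hTdef : L • T = ∑ i, α i • a i := by
    rw [hT, weiszfeldT, smul_smul]
    rw [show (∑ i, w i / ‖xk - a i‖) = L from rfl, mul_inv_cancel₀ hLpos.ne', one_smul]
  have hkey : ∀ z : H, ∑ i, α i • (z - a i) = L • (z - T) := by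
    intro z
    simp only [smul_sub, Finset.sum_sub_distrib, ← Finset.sum_smul, ← hL, hTdef]
  -- quadratic identity: the surrogate is a quadratic centered at T
  have hquad : ∀ z : H,
      ∑ i, α i * ‖z - a i‖ ^ 2 = L * ‖z - T‖ ^ 2 + ∑ i, α i * ‖T - a i‖ ^ 2 := by
    intro z
    have h1 : ∀ i, ‖z - a i‖ ^ 2
        = ‖z - T‖ ^ 2 + 2 * ⟪z - T, T - a i⟫ + ‖T - a i‖ ^ 2 := by
      intro i
      have h := norm_add_sq_real (z - T) (T - a i)
      rw [sub_add_sub_cancel] at h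
      linarith
    have hmid : ∑ i, α i * ⟪z - T, T - a i⟫ = 0 := by
      have h2 : ∑ i, α i * ⟪z - T, T - a i⟫ = ⟪z - T, ∑ i, α i • (T - a i)⟫ := by
        rw [inner_sum]
        exact Finset.sum_congr rfl fun i _ => (real_inner_smul_right _ _ _).symm
      rw [h2, hkey T]
      simp
    calc ∑ i, α i * ‖z - a i‖ ^ 2
        = ∑ i, (α i * ‖z - T‖ ^ 2 + 2 * (α i * ⟪z - T, T - a i⟫)
            + α i * ‖T - a i‖ ^ 2) := by
          refine Finset.sum_congr rfl fun i _ => ?_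
          rw [h1 i]; ring
      _ = L * ‖z - T‖ ^ 2 + 2 * ∑ i, α i * ⟪z - T, T - a i⟫
            + ∑ i, α i * ‖T - a i‖ ^ 2 := by
          rw [Finset.sum_add_distrib, Finset.sum_add_distrib, ← Finset.mul_sum,
            ← Finset.sum_mul]
      _ = L * ‖z - T‖ ^ 2 + ∑ i, α i * ‖T - a i‖ ^ 2 := by rw [hmid]; ring
  -- Step A: descent (surrogate) inequality, per-term AM-GM
  have hA : (∑ i, w i * ‖y - a i‖) - ∑ i, w i * ‖xk - a i‖ ≤
      ((∑ i, α i * ‖y - a i‖ ^ 2) - ∑ i, α i * ‖xk - a i‖ ^ 2) / 2 := by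
    rw [← Finset.sum_sub_distrib, ← Finset.sum_sub_distrib, Finset.sum_div]
    refine Finset.sum_le_sum fun i _ => ?_
    have hwd := hαd i
    have h0 := mul_nonneg (hαpos i).le (sq_nonneg (‖y - a i‖ - ‖xk - a i‖))
    rw [← hwd]
    nlinarith [h0]
  -- Step B: subgradient inequality, per-term Cauchy-Schwarz
  have hB : (∑ i, w i * ‖xk - a i‖) - ∑ i, w i * ‖x - a i‖ ≤
      L * ⟪xk - T, xk - x⟫ := by
    have hsum : ∑ i, α i * ⟪xk - a i, xk - x⟫ = L * ⟪xk - T, xk - x⟫ := by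
      have h2 : ∑ i, α i * ⟪xk - a i, xk - x⟫ = ⟪∑ i, α i • (xk - a i), xk - x⟫ := by
        rw [sum_inner]
        exact Finset.sum_congr rfl fun i _ => (real_inner_smul_left _ _ _).symm
      rw [h2, hkey xk, real_inner_smul_left]
    rw [← hsum, ← Finset.sum_sub_distrib]
    refine Finset.sum_le_sum fun i _ => ?_
    have hip : ⟪xk - a i, xk - x⟫ = ‖xk - a i‖ ^ 2 - ⟪xk - a i, x - a i⟫ := by
      rw [show xk - x = (xk - a i) - (x - a i) by abel, inner_sub_right,
        real_inner_self_eq_norm_sq]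
    have hcs : ⟪xk - a i, x - a i⟫ ≤ ‖xk - a i‖ * ‖x - a i‖ := real_inner_le_norm _ _
    have hwd := hαd i
    rw [hip, ← hwd]
    nlinarith [mul_le_mul_of_nonneg_left hcs (hαpos i).le]
  -- Projection variational inequality
  have hvi : ⟪T - y, x - y⟫ ≤ 0 := (hproj T).2 x hx
  -- Geometric identity step
  have hgeo : ‖y - T‖ ^ 2 - ‖xk - T‖ ^ 2 + 2 * ⟪xk - T, xk - x⟫ ≤
      ‖xk - x‖ ^ 2 - ‖y - x‖ ^ 2 := by
    have h1 : ‖xk - x‖ ^ 2 = ‖xk - T‖ ^ 2 + 2 * ⟪xk - T, T - x⟫ + ‖T - x‖ ^ 2 := by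
      have h := norm_add_sq_real (xk - T) (T - x)
      rw [sub_add_sub_cancel] at h
      linarith
    have h2 : ‖y - x‖ ^ 2 = ‖y - T‖ ^ 2 + 2 * ⟪y - T, T - x⟫ + ‖T - x‖ ^ 2 := by
      have h := norm_add_sq_real (y - T) (T - x)
      rw [sub_add_sub_cancel] at h
      linarith
    have h3 : ⟪xk - T, T - x⟫ = -‖xk - T‖ ^ 2 + ⟪xk - T, xk - x⟫ := by
      rw [show T - x = -(xk - T) + (xk - x) by abel, inner_add_right,
        inner_neg_right, real_inner_self_eq_norm_sq]
    have h4 : ⟪y - T, T - x⟫ = -‖y - T‖ ^ 2 + ⟪T - y, x - y⟫ := by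
      have h5 : (⟪y - T, x - y⟫ : ℝ) = -⟪T - y, x - y⟫ := by
        rw [← inner_neg_left, neg_sub]
      rw [show T - x = -(y - T) + -(x - y) by abel, inner_add_right,
        inner_neg_right, inner_neg_right, real_inner_self_eq_norm_sq, h5]
      ring
    linarith
  -- Combine everything
  have hAq : (∑ i, w i * ‖y - a i‖) - ∑ i, w i * ‖xk - a i‖ ≤
      (L * ‖y - T‖ ^ 2 - L * ‖xk - T‖ ^ 2) / 2 := by
    have := hA
    rw [hquad y, hquad xk] at this
    linarith
  have hfinal := mul_le_mul_of_nonneg_left hgeo (le_of_lt (half_pos hLpos))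
  calc (∑ i, w i * ‖y - a i‖) - ∑ i, w i * ‖x - a i‖
      ≤ (L * ‖y - T‖ ^ 2 - L * ‖xk - T‖ ^ 2) / 2 + L * ⟪xk - T, xk - x⟫ := by
        linarith
    _ = L / 2 * (‖y - T‖ ^ 2 - ‖xk - T‖ ^ 2 + 2 * ⟪xk - T, xk - x⟫) := by ring
    _ ≤ L / 2 * (‖xk - x‖ ^ 2 - ‖y - x‖ ^ 2) := hfinal
end

section
/- Fejér monotonicity of projected Weiszfeld: if x ∈ C satisfies f(x) ≤ f(x_k) for all k (in particular if x = x̄ is the optimal solution), then ‖x_{k+1} - x‖ ≤ ‖x_k - x‖ for all k, i.e., the iterates are nonincreasing in distance to x. -/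
open Finset
open scoped RealInnerProductSpace

theorem projected_weiszfeld_fejer_monotone
    {H : Type*} [NormedAddCommGroup H] [InnerProductSpace ℝ H] [CompleteSpace H]
    {m : ℕ} (hm : 1 ≤ m) (a : Fin m → H) (w : Fin m → ℝ) (hw : ∀ i, 0 < w i)
    (C : Set H) (hCne : C.Nonempty) (hCclosed : IsClosed C) (hCconv : Convex ℝ C)
    (proj : H → H)
    (hproj : ∀ x : H, proj x ∈ C ∧ ∀ z ∈ C, ⟪x - proj x, z - proj x⟫ ≤ 0)
    (xseq : ℕ → H) (hx0 : xseq 0 ∈ C)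
    (hrec : ∀ k, xseq (k + 1) = proj (weiszfeldT w a (xseq k)))
    (hA : ∀ k, xseq k ∉ Set.range a)
    (x : H) (hxC : x ∈ C)
    (hxle : ∀ k, (∑ i, w i * ‖x - a i‖) ≤ (∑ i, w i * ‖xseq k - a i‖)) :
    ∀ k, ‖xseq (k + 1) - x‖ ≤ ‖xseq k - x‖ := by
  have hne : Nonempty (Fin m) := ⟨⟨0, hm⟩⟩
  intro k
  have hxle' := hxle (k + 1)
  set y := xseq k with hy
  set p := xseq (k + 1) with hp
  -- distances are positive
  have hdpos : ∀ i, (0:ℝ) < ‖y - a i‖ := by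
    intro i
    rw [norm_pos_iff, sub_ne_zero]
    intro h
    exact hA k ⟨i, h.symm⟩
  set c : Fin m → ℝ := fun i => w i / ‖y - a i‖ with hc
  have hcpos : ∀ i, 0 < c i := fun i => div_pos (hw i) (hdpos i)
  have hwc : ∀ i, w i = c i * ‖y - a i‖ := by
    intro i
    rw [hc]
    exact (div_mul_cancel₀ (w i) (hdpos i).ne').symm
  have hLpos : 0 < ∑ i, c i := Finset.sum_pos (fun i _ => hcpos i) Finset.univ_nonempty
  set T := weiszfeldT w a y with hT
  have hTdef : T = (∑ i, c i)⁻¹ • ∑ i, c i • a i := by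
    rw [hT, weiszfeldT, hc]
  -- the gradient-type identity : ∑ cᵢ (T - aᵢ) = 0
  have hzero : ∑ i, c i • (T - a i) = 0 := by
    have h1 : ∑ i, c i • (T - a i) = (∑ i, c i) • T - ∑ i, c i • a i := by
      simp [smul_sub, Finset.sum_sub_distrib, ← Finset.sum_smul]
    rw [h1, hTdef, smul_inv_smul₀ hLpos.ne', sub_self]
  -- quadratic expansion of the surrogate around its minimizer T
  have hquad : ∀ z : H, ∑ i, c i * ‖z - a i‖^2
      = (∑ i, c i) * ‖z - T‖^2 + ∑ i, c i * ‖T - a i‖^2 := by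
    intro z
    have hmid : ∑ i, c i * ⟪z - T, T - a i⟫ = 0 := by
      have h2 : ∑ i, c i * ⟪z - T, T - a i⟫ = ⟪z - T, ∑ i, c i • (T - a i)⟫ := by
        rw [inner_sum]
        exact Finset.sum_congr rfl fun i _ => (real_inner_smul_right _ _ _).symm
      rw [h2, hzero, inner_zero_right]
    calc ∑ i, c i * ‖z - a i‖^2
        = ∑ i, (c i * ‖z - T‖^2 + 2 * (c i * ⟪z - T, T - a i⟫) + c i * ‖T - a i‖^2) := by
          refine Finset.sum_congr rfl fun i _ => ?_
          have h3 : z - a i = (z - T) + (T - a i) := by abel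
          rw [h3, norm_add_sq_real]
          ring
      _ = (∑ i, c i) * ‖z - T‖^2 + ∑ i, c i * ‖T - a i‖^2 := by
          rw [Finset.sum_add_distrib, Finset.sum_add_distrib, ← Finset.sum_mul,
            ← Finset.mul_sum, hmid, mul_zero, add_zero]
  -- p is the projection of T
  have hpT : p = proj T := hrec k
  have hpC : p ∈ C := hpT ▸ (hproj T).1
  have hip : 0 ≤ ⟪x - p, p - T⟫ := by
    have h4 : ⟪T - p, x - p⟫ ≤ 0 := by
      have := (hproj T).2 x hxC
      rwa [← hpT] at this
    have h5 : ⟪x - p, p - T⟫ = -⟪T - p, x - p⟫ := by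
      rw [real_inner_comm, show p - T = -(T - p) by abel, inner_neg_left]
    linarith [h5 ▸ neg_nonneg.mpr h4]
  -- (C) : surrogate value at p vs at x
  have hCineq : ∑ i, c i * ‖p - a i‖^2 ≤ ∑ i, c i * ‖x - a i‖^2 - (∑ i, c i) * ‖x - p‖^2 := by
    rw [hquad p, hquad x]
    have hexp : ‖x - T‖^2 = ‖x - p‖^2 + 2 * ⟪x - p, p - T⟫ + ‖p - T‖^2 := by
      have h6 : x - T = (x - p) + (p - T) := by abel
      rw [h6, norm_add_sq_real]
    have h7 : ‖x - p‖^2 + ‖p - T‖^2 ≤ ‖x - T‖^2 := by linarith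
    nlinarith [mul_le_mul_of_nonneg_left h7 hLpos.le]
  -- (B) : f(p) - f(y) ≤ (h(p) - h(y)) (AM-GM termwise)
  have hBineq : ∑ i, c i * ‖y - a i‖ * ‖p - a i‖
      ≤ ∑ i, (c i * ‖y - a i‖ * ‖y - a i‖ + (c i * ‖p - a i‖^2 - c i * ‖y - a i‖^2) / 2) := by
    refine Finset.sum_le_sum fun i _ => ?_
    nlinarith [sq_nonneg (‖p - a i‖ - ‖y - a i‖), (hcpos i).le]
  -- (D) : h(x) - h(y) ≤ (L/2)‖x-y‖² + f(x) - f(y)  (Cauchy–Schwarz termwise)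
  have hDineq : ∑ i, c i * ‖x - a i‖^2
      ≤ ∑ i, (c i * ‖x - y‖^2 + c i * ‖y - a i‖^2
          + 2 * (c i * ‖y - a i‖ * ‖x - a i‖ - c i * ‖y - a i‖ * ‖y - a i‖)) := by
    refine Finset.sum_le_sum fun i _ => ?_
    have hcs : ⟪x - a i, y - a i⟫ ≤ ‖x - a i‖ * ‖y - a i‖ := real_inner_le_norm _ _
    have h8 : ⟪x - y, y - a i⟫ = ⟪x - a i, y - a i⟫ - ‖y - a i‖^2 := by
      rw [show x - y = (x - a i) - (y - a i) by abel, inner_sub_left,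
        real_inner_self_eq_norm_sq]
    have h9 : ‖x - a i‖^2 = ‖x - y‖^2 + 2 * ⟪x - y, y - a i⟫ + ‖y - a i‖^2 := by
      rw [show x - a i = (x - y) + (y - a i) by abel, norm_add_sq_real]
    nlinarith [(hcpos i).le, hdpos i, mul_le_mul_of_nonneg_left hcs (hcpos i).le]
  -- rewrite f in terms of c
  have hfx : ∑ i, w i * ‖x - a i‖ = ∑ i, c i * ‖y - a i‖ * ‖x - a i‖ := by
    exact Finset.sum_congr rfl fun i _ => by rw [hwc i]
  have hfp : ∑ i, w i * ‖p - a i‖ = ∑ i, c i * ‖y - a i‖ * ‖p - a i‖ := by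
    exact Finset.sum_congr rfl fun i _ => by rw [hwc i]
  rw [hfx, hfp] at hxle'
  -- split the big sums
  rw [Finset.sum_add_distrib] at hBineq
  rw [Finset.sum_add_distrib, Finset.sum_add_distrib] at hDineq
  have hsplit1 : ∑ i, (c i * ‖p - a i‖^2 - c i * ‖y - a i‖^2) / 2
      = ((∑ i, c i * ‖p - a i‖^2) - ∑ i, c i * ‖y - a i‖^2) / 2 := by
    rw [← Finset.sum_div, Finset.sum_sub_distrib]
  have hsplit2 : ∑ i, c i * ‖x - y‖^2 = (∑ i, c i) * ‖x - y‖^2 := by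
    rw [Finset.sum_mul]
  have hsplit3 : ∑ i, 2 * (c i * ‖y - a i‖ * ‖x - a i‖ - c i * ‖y - a i‖ * ‖y - a i‖)
      = 2 * ((∑ i, c i * ‖y - a i‖ * ‖x - a i‖) - ∑ i, c i * ‖y - a i‖ * ‖y - a i‖) := by
    rw [← Finset.mul_sum, Finset.sum_sub_distrib]
  rw [hsplit1] at hBineq
  rw [hsplit2, hsplit3] at hDineq
  have hyy : ∑ i, c i * ‖y - a i‖ * ‖y - a i‖ = ∑ i, c i * ‖y - a i‖^2 := by
    exact Finset.sum_congr rfl fun i _ => by ring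
  rw [hyy] at hBineq hDineq
  -- combine : ‖x - p‖² ≤ ‖x - y‖²
  have h10 : (∑ i, c i) * ‖x - p‖^2 ≤ (∑ i, c i) * ‖x - y‖^2 := by linarith
  have hkey : ‖x - p‖^2 ≤ ‖x - y‖^2 := le_of_mul_le_mul_left h10 hLpos
  have hfin : ‖x - p‖ ≤ ‖x - y‖ := by
    nlinarith [norm_nonneg (x - p), norm_nonneg (x - y)]
  calc ‖p - x‖ = ‖x - p‖ := norm_sub_rev _ _
    _ ≤ ‖x - y‖ := hfin
    _ = ‖y - x‖ := norm_sub_rev _ _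
end
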